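/- arXiv:2102.12956 — 2 statements merged into one kernel-verified Lean document; each statement's English description precedes it below -/
import Mathlib

section
/- Let k : ℝ^d × ℝ^d → ℝ be a bounded, continuous, symmetric kernel that is positive definite, i.e. Σ_{i,j=1}^n α_i α_j k(x_i,x_j) ≥ 0 for every n ∈ ℕ, all α_1,…,α_n ∈ ℝ and all x_1,…,x_n ∈ ℝ^d. Then for every finite signed Borel measure μ on ℝ^d one has ∫∫ k(x,y) μ(dx) μ(dy) ≥ 0. -/
/-
Writing `μ = μ⁺ - μ⁻` with `μ⁺ ⟂ μ⁻` and `f = ±1` the Hahn sign, the double integral equals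
`I = ∫∫ f(x) f(y) k(x, y) dρ dρ` for the finite measure `ρ = μ⁺ + μ⁻`, and the kernel
`f(x) f(y) k(x, y)` is still positive definite. After normalising `ρ` to a probability measure,
integrate the positive-definiteness inequality over `n` i.i.d. samples `x₁, …, xₙ ~ ρ`: the
off-diagonal terms contribute `n(n-1) I` and the diagonal `n D` with `D = ∫ f² k(x, x) dρ`, so
`(n-1) I + D ≥ 0` for all `n`, forcing `I ≥ 0`.
-/

open MeasureTheory

/-- Integral of a real-valued function against a finite signed Borel measure,
defined via the Jordan decomposition. -/
noncomputable def sintegral {α : Type*} [MeasurableSpace α] (μ : SignedMeasure α)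
    (f : α → ℝ) : ℝ :=
  ∫ x, f x ∂μ.toJordanDecomposition.posPart - ∫ x, f x ∂μ.toJordanDecomposition.negPart

open ProbabilityTheory

lemma nonneg_of_forall_natCast_mul_add_nonneg {K : Type*} [Field K] [LinearOrder K]
    [IsStrictOrderedRing K] [Archimedean K] {a b : K} (h : ∀ n : ℕ, 0 ≤ n * a + b) : 0 ≤ a := by
  by_contra! ha
  obtain ⟨n, hn⟩ := exists_nat_gt (b / -a)
  rw [div_lt_iff₀ (neg_pos.2 ha)] at hn
  linarith [h n]

namespace MeasureTheory

variable {α : Type*} [MeasurableSpace α]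

lemma MeasurePreserving.integral_comp_of_aestronglyMeasurable {β E : Type*} [MeasurableSpace β]
    [NormedAddCommGroup E] [NormedSpace ℝ E] {μ : Measure α} {ν : Measure β} {f : α → β}
    (hf : MeasurePreserving f μ ν) {g : β → E} (hg : AEStronglyMeasurable g ν) :
    ∫ x, g (f x) ∂μ = ∫ y, g y ∂ν := by
  rw [← integral_map hf.aemeasurable (hf.map_eq ▸ hg), hf.map_eq]

lemma measurePreserving_pi_pair {ι : Type*} [Fintype ι] {β : ι → Type*}
    [∀ i, MeasurableSpace (β i)] (μ : ∀ i, Measure (β i)) [∀ i, IsProbabilityMeasure (μ i)]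
    {i j : ι} (hij : i ≠ j) :
    MeasurePreserving (fun x => (x i, x j)) (Measure.pi μ) ((μ i).prod (μ j)) := by
  have hmeas (l : ι) := measurePreserving_eval μ l
  refine ⟨(hmeas i).measurable.prodMk (hmeas j).measurable, ?_⟩
  have hindep := (iIndepFun_pi (μ := μ) (X := fun _ => id) fun _ => aemeasurable_id).indepFun hij
  rw [(indepFun_iff_map_prod_eq_prod_map_map (hmeas i).measurable.aemeasurable
    (hmeas j).measurable.aemeasurable).1 hindep, (hmeas i).map_eq, (hmeas j).map_eq]

section Sampling

variable (ρ : Measure α) [IsProbabilityMeasure ρ] {ι : Type*} [Fintype ι]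

lemma integral_sum_sum_pi {F : α × α → ℝ} (hF : Integrable F (ρ.prod ρ))
    (hdiag : Integrable (fun a => F (a, a)) ρ) :
    ∫ x, ∑ i, ∑ j, F (x i, x j) ∂(Measure.pi fun _ : ι => ρ)
      = Fintype.card ι * ((Fintype.card ι - 1) * ∫ p, F p ∂ρ.prod ρ + ∫ a, F (a, a) ∂ρ) := by
  classical
  have hterm (i j : ι) : Integrable (fun x : ι → α => F (x i, x j)) (Measure.pi fun _ => ρ) ∧
      ∫ x, F (x i, x j) ∂(Measure.pi fun _ => ρ)
        = if i = j then ∫ a, F (a, a) ∂ρ else ∫ p, F p ∂ρ.prod ρ := by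
    by_cases hij : i = j
    · subst hij
      have h := measurePreserving_eval (fun _ : ι => ρ) i
      refine ⟨(h.integrable_comp hdiag.aestronglyMeasurable).2 hdiag, ?_⟩
      rw [if_pos rfl]
      exact h.integral_comp_of_aestronglyMeasurable (g := fun a => F (a, a))
        hdiag.aestronglyMeasurable
    · have h := measurePreserving_pi_pair (fun _ => ρ) hij
      refine ⟨(h.integrable_comp hF.aestronglyMeasurable).2 hF, ?_⟩
      rw [if_neg hij]
      exact h.integral_comp_of_aestronglyMeasurable hF.aestronglyMeasurable
  rw [integral_finsetSum _ fun i _ => integrable_finsetSum _ fun j _ => (hterm i j).1]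
  simp_rw [integral_finsetSum _ fun j _ => (hterm _ j).1, fun i j => (hterm i j).2]
  have hsplit (i j : ι) : (if i = j then ∫ a, F (a, a) ∂ρ else ∫ p, F p ∂ρ.prod ρ)
      = ∫ p, F p ∂ρ.prod ρ + if i = j then ∫ a, F (a, a) ∂ρ - ∫ p, F p ∂ρ.prod ρ else 0 := by
    split_ifs <;> ring
  simp only [hsplit, Finset.sum_add_distrib, Finset.sum_ite_eq, Finset.mem_univ, if_true,
    Finset.sum_const, Finset.card_univ, nsmul_eq_mul]
  ring

lemma integral_prod_self_nonneg_of_isProbabilityMeasure {F : α × α → ℝ} (hF : Integrable F (ρ.prod ρ))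
    (hdiag : Integrable (fun a => F (a, a)) ρ)
    (hsum : ∀ (n : ℕ) (x : Fin n → α), 0 ≤ ∑ i, ∑ j, F (x i, x j)) :
    0 ≤ ∫ p, F p ∂ρ.prod ρ := by
  refine nonneg_of_forall_natCast_mul_add_nonneg (b := ∫ a, F (a, a) ∂ρ) fun n => ?_
  have hmean : 0 ≤ ∫ x, ∑ i, ∑ j, F (x i, x j) ∂(Measure.pi fun _ : Fin (n + 1) => ρ) :=
    integral_nonneg fun x => hsum (n + 1) x
  rw [integral_sum_sum_pi ρ hF hdiag] at hmean
  simp only [Fintype.card_fin, Nat.cast_add, Nat.cast_one, add_sub_cancel_right] at hmean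
  exact nonneg_of_mul_nonneg_right hmean (by positivity)

end Sampling

lemma integral_prod_self_nonneg (ρ : Measure α) [IsFiniteMeasure ρ]
    {F : α × α → ℝ} (hF : Integrable F (ρ.prod ρ)) (hdiag : Integrable (fun a => F (a, a)) ρ)
    (hsum : ∀ (n : ℕ) (x : Fin n → α), 0 ≤ ∑ i, ∑ j, F (x i, x j)) :
    0 ≤ ∫ p, F p ∂ρ.prod ρ := by
  rcases eq_zero_or_neZero ρ with rfl | hρ
  · simp
  have hc : (ρ Set.univ)⁻¹ ≠ ⊤ := ENNReal.inv_ne_top.2 (NeZero.ne _)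
  have hnormalized := integral_prod_self_nonneg_of_isProbabilityMeasure ((ρ Set.univ)⁻¹ • ρ)
    (by simpa only [Measure.prod_smul_left, Measure.prod_smul_right] using
      (hF.smul_measure hc).smul_measure hc) (hdiag.smul_measure hc) hsum
  simp only [Measure.prod_smul_left, Measure.prod_smul_right, integral_smul_measure,
    smul_eq_mul] at hnormalized
  have hpos : 0 < ((ρ Set.univ)⁻¹).toReal :=
    ENNReal.toReal_pos (ENNReal.inv_ne_zero.2 (measure_ne_top _ _)) hc
  exact nonneg_of_mul_nonneg_right (nonneg_of_mul_nonneg_right hnormalized hpos) hpos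

lemma Measure.MutuallySingular.exists_sign {P N : Measure α} (h : P ⟂ₘ N) :
    ∃ f : α → ℝ, Measurable f ∧ (∀ x, |f x| = 1) ∧ f =ᵐ[P] 1 ∧ f =ᵐ[N] -1 := by
  classical
  obtain ⟨s, hs, hPs, hNs⟩ := h
  refine ⟨fun x => if x ∈ s then -1 else 1, Measurable.ite hs measurable_const measurable_const,
    fun x => by dsimp only; split_ifs <;> simp, ?_, ?_⟩
  · filter_upwards [measure_eq_zero_iff_ae_notMem.1 hPs] with x hx
    simp [hx]
  · filter_upwards [measure_eq_zero_iff_ae_notMem.1 hNs] with x hx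
    simp [Set.not_notMem.1 hx]

lemma integral_sub_integral_eq_integral_mul {P N : Measure α} {f g : α → ℝ} (hfP : f =ᵐ[P] 1)
    (hfN : f =ᵐ[N] -1) (hg : Integrable g (P + N)) :
    ∫ x, g x ∂P - ∫ x, g x ∂N = ∫ x, f x * g x ∂(P + N) := by
  have hgP : (fun x => f x * g x) =ᵐ[P] g := by
    filter_upwards [hfP] with x hx
    simp [hx]
  have hgN : (fun x => f x * g x) =ᵐ[N] -g := by
    filter_upwards [hfN] with x hx
    simp [hx]
  rw [integral_add_measure
      ((hg.mono_measure (Measure.le_add_right le_rfl)).congr hgP.symm)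
      ((hg.mono_measure (Measure.le_add_left le_rfl)).neg.congr hgN.symm),
    integral_congr_ae hgP, integral_congr_ae hgN, integral_neg', sub_eq_add_neg]

end MeasureTheory

theorem sintegral_sintegral_nonneg {α : Type*} [MeasurableSpace α] (μ : SignedMeasure α)
    {k : α × α → ℝ} (hk : Measurable k) {C : ℝ} (hC : ∀ p, |k p| ≤ C)
    (hpd : ∀ (n : ℕ) (a : Fin n → ℝ) (x : Fin n → α), 0 ≤ ∑ i, ∑ j, a i * a j * k (x i, x j)) :
    0 ≤ sintegral μ (fun x => sintegral μ fun y => k (x, y)) := by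
  set ρ := μ.toJordanDecomposition.posPart + μ.toJordanDecomposition.negPart
  obtain ⟨f, hfm, hf1, hfP, hfN⟩ := μ.toJordanDecomposition.mutuallySingular.exists_sign
  have hbounded {β : Type _} [MeasurableSpace β] (ν : Measure β) [IsFiniteMeasure ν] {g : β → ℝ}
      (hg : Measurable g) (hgC : ∀ x, |g x| ≤ C) : Integrable g ν :=
    .of_bound hg.aestronglyMeasurable C (ae_of_all _ hgC)
  set H : α × α → ℝ := fun p => f p.2 * k p
  set F : α × α → ℝ := fun p => f p.1 * f p.2 * k p
  have hH : Integrable H (ρ.prod ρ) :=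
    hbounded _ ((hfm.comp measurable_snd).mul hk) fun p => by simp [H, abs_mul, hf1, hC]
  have hF : Integrable F (ρ.prod ρ) :=
    hbounded _ (((hfm.comp measurable_fst).mul (hfm.comp measurable_snd)).mul hk)
      fun p => by simp [F, abs_mul, hf1, hC]
  have hinner (x : α) : sintegral μ (fun y => k (x, y)) = ∫ y, H (x, y) ∂ρ :=
    integral_sub_integral_eq_integral_mul hfP hfN
      (hbounded _ (hk.comp measurable_prodMk_left) fun y => hC (x, y))
  have houter : sintegral μ (fun x => ∫ y, H (x, y) ∂ρ) = ∫ p, F p ∂ρ.prod ρ := by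
    rw [integral_prod F hF]
    refine (integral_sub_integral_eq_integral_mul hfP hfN hH.integral_prod_left).trans ?_
    simp only [F, H, ← integral_const_mul, mul_assoc]
    rfl
  simp only [hinner, houter]
  refine integral_prod_self_nonneg ρ hF
    (hbounded _ (((hfm.mul hfm).mul (hk.comp (measurable_id.prodMk measurable_id))))
      fun a => by simp [F, abs_mul, hf1, hC]) fun n x => ?_
  simpa [F] using hpd n (fun i => f (x i)) x

theorem stmt_0_general {d : ℕ} (k : EuclideanSpace ℝ (Fin d) × EuclideanSpace ℝ (Fin d) → ℝ)
    (hbdd : ∃ C : ℝ, ∀ x y : EuclideanSpace ℝ (Fin d), |k (x, y)| ≤ C)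
    (hcont : Continuous k)
    (hpd : ∀ (n : ℕ) (a : Fin n → ℝ) (x : Fin n → EuclideanSpace ℝ (Fin d)),
      0 ≤ ∑ i, ∑ j, a i * a j * k (x i, x j))
    (μ : SignedMeasure (EuclideanSpace ℝ (Fin d))) :
    0 ≤ sintegral μ (fun x => sintegral μ (fun y => k (x, y))) := by
  obtain ⟨C, hC⟩ := hbdd
  exact sintegral_sintegral_nonneg μ hcont.measurable (fun p => hC p.1 p.2) hpd

/-- A bounded, continuous, symmetric, positive definite kernel integrates
nonnegatively against any finite signed Borel measure (twice). -/
theorem stmt_0 {d : ℕ} (k : EuclideanSpace ℝ (Fin d) × EuclideanSpace ℝ (Fin d) → ℝ)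
    (hbdd : ∃ C : ℝ, ∀ x y : EuclideanSpace ℝ (Fin d), |k (x, y)| ≤ C)
    (hcont : Continuous k)
    (hsymm : ∀ x y : EuclideanSpace ℝ (Fin d), k (x, y) = k (y, x))
    (hpd : ∀ (n : ℕ) (a : Fin n → ℝ) (x : Fin n → EuclideanSpace ℝ (Fin d)),
      0 ≤ ∑ i, ∑ j, a i * a j * k (x i, x j))
    (μ : SignedMeasure (EuclideanSpace ℝ (Fin d))) :
    0 ≤ sintegral μ (fun x => sintegral μ (fun y => k (x, y))) :=
  stmt_0_general k hbdd hcont hpd μ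
end

section
/- Let k : ℝ^d × ℝ^d → ℝ be bounded, continuous, symmetric and integrally strictly positive definite, i.e. ∫∫ k(x,y) μ(dx) μ(dy) > 0 for every finite signed Borel measure μ on ℝ^d that is not the zero measure. Let ρ be a Borel probability measure on ℝ^d and φ ∈ L²(ρ). If ∫ k(x,y) φ(y) ρ(dy) = 0 for ρ-almost every x ∈ ℝ^d, then φ = 0 ρ-almost everywhere. In particular, the integral operator T_{k,ρ} is injective on L²(ρ). -/
open MeasureTheory

/-!
Take a measurable representative `ψ` of `φ` and the signed measure `μ = ψ • ρ`. Its Jordan parts are `ψ⁺ • ρ` and `ψ⁻ • ρ`, so `μ`-integrals of bounded functions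
are `ρ`-integrals against `ψ`, and both parts are absolutely continuous with respect to `ρ`.
Hence `∫ k(x, y) μ(dy) = (T_{k,ρ} φ)(x) = 0` for `ρ`-a.e. `x`, which forces the double integral
of `k` against `μ` to vanish; by strict positive definiteness `μ = 0`, that is `φ = 0` `ρ`-a.e.
-/

namespace MeasureTheory

variable {α : Type*} [MeasurableSpace α] {ρ : Measure α} {ψ : α → ℝ}

theorem SignedMeasure.toJordanDecomposition_withDensityᵥ (hψ : Measurable ψ)
    (hψi : Integrable ψ ρ) :
    (toJordanDecomposition (ρ.withDensityᵥ ψ)).posPart =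
        ρ.withDensity (fun x => ENNReal.ofReal (ψ x)) ∧
      (toJordanDecomposition (ρ.withDensityᵥ ψ)).negPart =
        ρ.withDensity (fun x => ENNReal.ofReal (-ψ x)) := by
  rw [toJordanDecomposition_eq_of_eq_add_withDensity hψ hψi
    VectorMeasure.MutuallySingular.zero_left (zero_add _).symm]
  simp [toJordanDecomposition_zero]

theorem integral_withDensity_ofReal (hψ : Measurable ψ) (f : α → ℝ) :
    ∫ x, f x ∂ρ.withDensity (fun x => ENNReal.ofReal (ψ x)) = ∫ x, max (ψ x) 0 * f x ∂ρ := by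
  rw [integral_withDensity_eq_integral_toReal_smul hψ.ennreal_ofReal
    (ae_of_all _ fun _ => ENNReal.ofReal_lt_top)]
  simp_rw [ENNReal.toReal_ofReal', smul_eq_mul]

theorem sintegral_withDensityᵥ (hψ : Measurable ψ) (hψi : Integrable ψ ρ) {f : α → ℝ}
    (hf : Measurable f) {C : ℝ} (hfC : ∀ x, |f x| ≤ C) :
    sintegral (ρ.withDensityᵥ ψ) f = ∫ x, f x * ψ x ∂ρ := by
  obtain ⟨hpos, hneg⟩ := SignedMeasure.toJordanDecomposition_withDensityᵥ hψ hψi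
  have hbdd : ∀ᵐ x ∂ρ, ‖f x‖ ≤ C := ae_of_all _ hfC
  rw [sintegral, hpos, hneg, integral_withDensity_ofReal hψ,
    integral_withDensity_ofReal (ψ := fun x => -ψ x) hψ.neg, ← integral_sub]
  · congr 1 with x
    rcases le_total (ψ x) 0 with h | h
    · rw [max_eq_right h, max_eq_left (neg_nonneg.mpr h)]; ring
    · rw [max_eq_left h, max_eq_right (neg_nonpos.mpr h)]; ring
  · exact hψi.pos_part.mul_bdd hf.aestronglyMeasurable hbdd
  · exact hψi.neg.pos_part.mul_bdd hf.aestronglyMeasurable hbdd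

theorem sintegral_withDensityᵥ_eq_zero_of_ae_eq_zero (hψ : Measurable ψ) (hψi : Integrable ψ ρ)
    {f : α → ℝ} (hf : f =ᵐ[ρ] 0) : sintegral (ρ.withDensityᵥ ψ) f = 0 := by
  obtain ⟨hpos, hneg⟩ := SignedMeasure.toJordanDecomposition_withDensityᵥ hψ hψi
  rw [sintegral, hpos, hneg, integral_eq_zero_of_ae ((withDensity_absolutelyContinuous ρ _).ae_eq hf),
    integral_eq_zero_of_ae ((withDensity_absolutelyContinuous ρ _).ae_eq hf), sub_zero]

theorem ae_eq_zero_of_integral_kernel_mul_ae_eq_zero {k : α → α → ℝ}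
    (hk : ∀ x, Measurable (k x)) {C : ℝ} (hkC : ∀ x y, |k x y| ≤ C)
    (hispd : ∀ μ : SignedMeasure α, μ ≠ 0 → 0 < sintegral μ fun x => sintegral μ (k x))
    {φ : α → ℝ} (hφ : Integrable φ ρ) (h0 : ∀ᵐ x ∂ρ, ∫ y, k x y * φ y ∂ρ = 0) :
    φ =ᵐ[ρ] 0 := by
  set ψ := hφ.1.mk φ
  have hψ : Measurable ψ := hφ.1.stronglyMeasurable_mk.measurable
  have hφψ : φ =ᵐ[ρ] ψ := hφ.1.ae_eq_mk
  have hψi : Integrable ψ ρ := hφ.congr hφψ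
  have hinner : ∀ᵐ x ∂ρ, sintegral (ρ.withDensityᵥ ψ) (k x) = 0 := by
    filter_upwards [h0] with x hx
    rw [sintegral_withDensityᵥ hψ hψi (hk x) (hkC x), ← hx]
    exact integral_congr_ae (hφψ.symm.mono fun y hy => congrArg (k x y * ·) hy)
  have hμ : ρ.withDensityᵥ ψ = 0 := by
    by_contra hne
    exact (hispd _ hne).ne' (sintegral_withDensityᵥ_eq_zero_of_ae_eq_zero hψ hψi hinner)
  refine hφψ.trans (hψi.ae_eq_of_withDensityᵥ_eq (integrable_zero _ _ ρ) ?_)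
  rw [hμ, withDensityᵥ_zero]

end MeasureTheory

theorem stmt_4_general {d : ℕ} (k : EuclideanSpace ℝ (Fin d) × EuclideanSpace ℝ (Fin d) → ℝ)
    (hbdd : ∃ C : ℝ, ∀ x y : EuclideanSpace ℝ (Fin d), |k (x, y)| ≤ C)
    (hcont : Continuous k)
    (hispd : ∀ μ : SignedMeasure (EuclideanSpace ℝ (Fin d)), μ ≠ 0 →
      0 < sintegral μ (fun x => sintegral μ (fun y => k (x, y))))
    (ρ : Measure (EuclideanSpace ℝ (Fin d))) [IsProbabilityMeasure ρ]
    (φ : EuclideanSpace ℝ (Fin d) → ℝ) (hφ : MemLp φ 2 ρ)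
    (h0 : ∀ᵐ x ∂ρ, ∫ y, k (x, y) * φ y ∂ρ = 0) :
    φ =ᵐ[ρ] 0 := by
  obtain ⟨C, hC⟩ := hbdd
  exact ae_eq_zero_of_integral_kernel_mul_ae_eq_zero (k := fun x y => k (x, y))
    (fun x => (hcont.comp (Continuous.prodMk_right x)).measurable) hC hispd
    (hφ.integrable one_le_two) h0

/-- If `k` is bounded, continuous, symmetric and integrally strictly positive definite,
then the kernel integral operator `T_{k,ρ}` is injective on `L²(ρ)`: if
`∫ k(x,y) φ(y) ρ(dy) = 0` for ρ-a.e. `x`, then `φ = 0` ρ-a.e. -/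
theorem stmt_4 {d : ℕ} (k : EuclideanSpace ℝ (Fin d) × EuclideanSpace ℝ (Fin d) → ℝ)
    (hbdd : ∃ C : ℝ, ∀ x y : EuclideanSpace ℝ (Fin d), |k (x, y)| ≤ C)
    (hcont : Continuous k)
    (hsymm : ∀ x y : EuclideanSpace ℝ (Fin d), k (x, y) = k (y, x))
    (hispd : ∀ μ : SignedMeasure (EuclideanSpace ℝ (Fin d)), μ ≠ 0 →
      0 < sintegral μ (fun x => sintegral μ (fun y => k (x, y))))
    (ρ : Measure (EuclideanSpace ℝ (Fin d))) [IsProbabilityMeasure ρ]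
    (φ : EuclideanSpace ℝ (Fin d) → ℝ) (hφ : MemLp φ 2 ρ)
    (h0 : ∀ᵐ x ∂ρ, ∫ y, k (x, y) * φ y ∂ρ = 0) :
    φ =ᵐ[ρ] 0 :=
  stmt_4_general k hbdd hcont hispd ρ φ hφ h0
end
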